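/- If S is a (unital) subring of a ring R and R is a CSNC ring, then S is a CSNC ring. -/

import Mathlib

/-- An element `a` of a ring is *clean* if `a = e + u` for some idempotent `e` and unit `u`. -/
def IsCleanElem {R : Type*} [Ring R] (a : R) : Prop :=
  ∃ e u : R, IsIdempotentElem e ∧ IsUnit u ∧ a = e + u

/-- An element `a` of a ring is *strongly nil-clean* if `a = e + q` for some idempotent `e`
and nilpotent `q` with `e * q = q * e`. -/
def IsStronglyNilCleanElem {R : Type*} [Ring R] (a : R) : Prop :=
  ∃ e q : R, IsIdempotentElem e ∧ IsNilpotent q ∧ e * q = q * e ∧ a = e + q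

/-- A ring is a *CSNC ring* if every clean element is strongly nil-clean. -/
def IsCSNCRing (R : Type*) [Ring R] : Prop :=
  ∀ a : R, IsCleanElem a → IsStronglyNilCleanElem a

/-!
An element `a` is strongly nil-clean exactly when `a - a ^ 2` is nilpotent: the idempotent
`e = 1 - (1 - a ^ n) ^ n` (with `(a - a ^ 2) ^ n = 0`) is a polynomial in `a`, and `a - e` is a
multiple of `a - a ^ 2` by a polynomial in `a`. Nilpotency of `a - a ^ 2` is reflected by the
inclusion of a subring, and clean elements of a subring are clean in the ambient ring.
-/

open Polynomial

/-- Modulo `x - x ^ 2` the element `x` is idempotent, so it agrees with `1 - (1 - x ^ n) ^ n`. -/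
theorem sub_sq_dvd_sub_one_sub_one_sub_pow_pow {A : Type*} [CommRing A] (x : A) {n : ℕ}
    (hn : n ≠ 0) : x - x ^ 2 ∣ x - (1 - (1 - x ^ n) ^ n) := by
  rw [← Ideal.mem_span_singleton, ← Ideal.Quotient.eq_zero_iff_mem]
  set mk := Ideal.Quotient.mk (Ideal.span {x - x ^ 2})
  have hidem : IsIdempotentElem (mk x) := by
    rw [IsIdempotentElem, ← sub_eq_zero, ← map_mul, ← map_sub, ← sq,
      Ideal.Quotient.eq_zero_iff_mem, Ideal.mem_span_singleton, dvd_sub_comm]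
  obtain ⟨k, rfl⟩ := Nat.exists_eq_add_one_of_ne_zero hn
  simp only [map_sub, map_one, map_pow, hidem.pow_succ_eq, hidem.one_sub.pow_succ_eq,
    sub_sub_cancel, sub_self]

section Ring

variable {R : Type*} [Ring R]

theorem isNilpotent_sub_one_sub_one_sub_pow_pow {x : R} {n : ℕ}
    (hx : (x - x ^ 2) ^ n = 0) : IsNilpotent (x - (1 - (1 - x ^ n) ^ n)) := by
  rcases eq_or_ne n 0 with rfl | hn
  · have : Subsingleton R := subsingleton_of_zero_eq_one (by simpa using hx.symm)
    exact ⟨1, Subsingleton.elim _ _⟩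
  obtain ⟨q, hq⟩ := sub_sq_dvd_sub_one_sub_one_sub_pow_pow (X : ℤ[X]) hn
  have hx' : x - (1 - (1 - x ^ n) ^ n) = (x - x ^ 2) * aeval x q := by
    simpa using congrArg (aeval x) hq
  rw [hx']
  refine Commute.isNilpotent_mul_right ?_ ⟨n, hx⟩
  have hcomm := (Commute.all (X - X ^ 2 : ℤ[X]) q).map (aeval x)
  rwa [map_sub, map_pow, aeval_X] at hcomm

theorem IsStronglyNilCleanElem.isNilpotent_sub_sq {a : R}
    (h : IsStronglyNilCleanElem a) : IsNilpotent (a - a ^ 2) := by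
  obtain ⟨e, q, he, hq, heq, rfl⟩ := h
  have hqe : Commute q e := heq.symm
  have hcomm : Commute q (1 - e - e - q) :=
    (((Commute.one_right q).sub_right hqe).sub_right hqe).sub_right rfl
  convert hcomm.isNilpotent_mul_right hq using 1
  rw [sq, add_mul, mul_add, mul_add, he.eq, heq]
  noncomm_ring

theorem isStronglyNilCleanElem_of_isNilpotent_sub_sq {a : R}
    (h : IsNilpotent (a - a ^ 2)) : IsStronglyNilCleanElem a := by
  obtain ⟨n, hn⟩ := h
  have hcomm : Commute a (1 - (1 - a ^ n) ^ n) :=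
    ((Commute.one_right a).sub_right (((Commute.one_right a).sub_right
      ((Commute.refl a).pow_right n)).pow_right n))
  exact ⟨_, _, isIdempotentElem_one_sub_one_sub_pow_pow a n hn,
    isNilpotent_sub_one_sub_one_sub_pow_pow hn, (hcomm.symm.sub_right rfl).eq, by abel⟩

theorem isStronglyNilCleanElem_iff_isNilpotent_sub_sq {a : R} :
    IsStronglyNilCleanElem a ↔ IsNilpotent (a - a ^ 2) :=
  ⟨IsStronglyNilCleanElem.isNilpotent_sub_sq, isStronglyNilCleanElem_of_isNilpotent_sub_sq⟩

end Ring

theorem IsCleanElem.map {R S F : Type*} [Ring R] [Ring S] [FunLike F R S] [RingHomClass F R S]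
    (f : F) {a : R} (h : IsCleanElem a) : IsCleanElem (f a) := by
  obtain ⟨e, u, he, hu, rfl⟩ := h
  exact ⟨f e, f u, he.map f, hu.map f, map_add f e u⟩

theorem stmt_4 (R : Type*) [Ring R] (S : Subring R) (h : IsCSNCRing R) :
    IsCSNCRing S := by
  intro a ha
  have hR := (h _ (ha.map S.subtype)).isNilpotent_sub_sq
  rw [isStronglyNilCleanElem_iff_isNilpotent_sub_sq,
    ← IsNilpotent.map_iff (f := S.subtype) Subtype.val_injective]
  simpa using hR
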